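/- Let f_W : ℝ^d → ℝ^k with f_W(x) = σ(Wx) be a single neural network layer, where W ∈ ℝ^{k×d} and σ : ℝ → ℝ is C-Lipschitz and applied elementwise. Let G be a compact group with orthogonal representations φ on ℝ^d and ψ on ℝ^k such that σ(ψ(g)v) = ψ(g)σ(v) for all g ∈ G, v ∈ ℝ^k. Let μ be a G-invariant probability measure on ℝ^d with finite covariance matrix Σ = ∫ x xᵀ dμ(x), and assume f_W ∈ L2(ℝ^d, ℝ^k, μ). Write W̄ = ∫_G ψ(g⁻¹) W φ(g) dλ(g) and W⊥ = W − W̄. Then the squared L2 distance from f_W to its equivariant projection satisfies ‖(id − Q) f_W‖_μ² ≤ 2C² ‖W⊥ Σ^{1/2}‖_F² ≤ 2C² ‖Σ^{1/2}‖_F² ‖W⊥‖_F². -/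

import Mathlib

open MeasureTheory Matrix
open scoped ENNReal

open scoped ComplexOrder in
/-- The positive semidefinite square root, as defined in the older Mathlib
(`Matrix.PosSemidef.sqrt`, since removed). -/
noncomputable def Matrix.PosSemidef.sqrt {n : Type*} [Fintype n] [DecidableEq n]
    {𝕜 : Type*} [RCLike 𝕜] {A : Matrix n n 𝕜} (hA : A.PosSemidef) : Matrix n n 𝕜 :=
  (hA.1.eigenvectorUnitary : Matrix n n 𝕜) *
    Matrix.diagonal (fun i => ((Real.sqrt (hA.1.eigenvalues i) : ℝ) : 𝕜)) *
    star (hA.1.eigenvectorUnitary : Matrix n n 𝕜)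

/-!
Write `M_g = ψ(g⁻¹) W φ(g)`. Equivariance of `σ` turns `Q f_W (x)` into the `λ`-average of
`σ(M_g x)`, so Jensen's inequality and the Lipschitz bound give, for every `x`,
`‖f_W(x) - Q f_W(x)‖² ≤ C² ∫ ‖(W - M_g) x‖² dλ`. Integrating in `x` and swapping the integrals
turns the right side into `C² ∫ ⟪W - M_g, W - M_g⟫_Σ dλ` with `⟪A, B⟫_Σ = tr(A Σ Bᵀ)`.
Invariance of `μ` and orthogonality of `ψ` make `g ↦ M_g` an orbit of isometries for this form,
and invariance of `λ` makes its mean `W̄` a fixed point; hence `W̄` is the orthogonal projection of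
`W` onto the fixed points and the mean squared distance is `2 ‖W - W̄‖²_Σ = 2 ‖W⊥ Σ^{1/2}‖_F²`.
The second inequality is Cauchy–Schwarz for the Frobenius norm.
-/

open scoped ComplexOrder NNReal

namespace Matrix.PosSemidef

variable {n 𝕜 : Type*} [Fintype n] [DecidableEq n] [RCLike 𝕜] {A : Matrix n n 𝕜}

theorem conjTranspose_sqrt (hA : A.PosSemidef) : hA.sqrtᴴ = hA.sqrt := by
  rw [← star_eq_conjTranspose]
  simp only [sqrt, star_mul, star_star, Matrix.mul_assoc, star_eq_conjTranspose (diagonal _),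
    diagonal_conjTranspose]
  congr 3
  funext i
  simp [RCLike.star_def]

theorem sqrt_mul_self (hA : A.PosSemidef) : hA.sqrt * hA.sqrt = A := by
  have hU : star (hA.1.eigenvectorUnitary : Matrix n n 𝕜) * hA.1.eigenvectorUnitary = 1 :=
    Unitary.star_mul_self_of_mem hA.1.eigenvectorUnitary.2
  conv_rhs => rw [hA.1.spectral_theorem, Unitary.conjStarAlgAut_apply]
  simp only [sqrt, Matrix.mul_assoc]
  rw [← Matrix.mul_assoc _ _ (diagonal _ * _), hU, Matrix.one_mul,
    ← Matrix.mul_assoc (diagonal _), diagonal_mul_diagonal]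
  congr 3
  funext i
  simp [← RCLike.ofReal_mul, Real.mul_self_sqrt (hA.eigenvalues_nonneg i)]

end Matrix.PosSemidef

theorem LinearMap.BilinForm.IsSymm.apply_sub_sub_of_apply_self_eq {E : Type*} [AddCommGroup E]
    [Module ℝ E] {B : LinearMap.BilinForm ℝ E} (hB : B.IsSymm) {v w : E} (h : B v v = B w w) :
    B (w - v) (w - v) = 2 * B w w - 2 * B v w := by
  simp only [map_sub, LinearMap.sub_apply, hB.eq w v, h]
  ring

theorem LipschitzWith.memLp_comp {α : Type*} [MeasurableSpace α] {ν : Measure α}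
    [IsFiniteMeasure ν] {σ : ℝ → ℝ} {K : ℝ≥0} (hσ : LipschitzWith K σ) {p : ℝ≥0∞} {u : α → ℝ}
    (hu : MemLp u p ν) : MemLp (fun a => σ (u a)) p ν := by
  have h0 : MemLp (fun a => σ (u a) - σ 0) p ν :=
    hu.of_le_mul ((hσ.continuous.comp_aestronglyMeasurable hu.1).sub aestronglyMeasurable_const)
      (ae_of_all _ fun a => by simpa [Real.dist_eq] using hσ.dist_le_mul (u a) 0)
  convert h0.add (memLp_const (σ 0)) using 1
  ext a
  simp

theorem LipschitzWith.sq_sub_integral_comp_le {α : Type*} [MeasurableSpace α] {ν : Measure α}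
    [IsProbabilityMeasure ν] {σ : ℝ → ℝ} {K : ℝ≥0} (hσ : LipschitzWith K σ) (a : ℝ) {u : α → ℝ}
    (hu : MemLp u 2 ν) :
    (σ a - ∫ g, σ (u g) ∂ν) ^ 2 ≤ K ^ 2 * ∫ g, (a - u g) ^ 2 ∂ν := by
  have hσu := hσ.memLp_comp hu
  have hX : MemLp (fun g => σ a - σ (u g)) 2 ν := (memLp_const _).sub hσu
  have hd : MemLp (fun g => a - u g) 2 ν := (memLp_const _).sub hu
  have hjensen : (∫ g, (σ a - σ (u g)) ∂ν) ^ 2 ≤ ∫ g, (σ a - σ (u g)) ^ 2 ∂ν := by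
    have := ProbabilityTheory.variance_nonneg (fun g => σ a - σ (u g)) ν
    rw [ProbabilityTheory.variance_eq_sub hX] at this
    simpa using this
  calc (σ a - ∫ g, σ (u g) ∂ν) ^ 2 = (∫ g, (σ a - σ (u g)) ∂ν) ^ 2 := by
        rw [integral_sub (integrable_const _) (hσu.integrable one_le_two)]
        simp
    _ ≤ ∫ g, (σ a - σ (u g)) ^ 2 ∂ν := hjensen
    _ ≤ ∫ g, K ^ 2 * (a - u g) ^ 2 ∂ν := by
        refine integral_mono hX.integrable_sq (hd.integrable_sq.const_mul _) fun g => ?_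
        have h := hσ.dist_le_mul a (u g)
        rw [Real.dist_eq, Real.dist_eq] at h
        rw [← sq_abs, ← sq_abs (a - u g), ← mul_pow]
        exact pow_le_pow_left₀ (abs_nonneg _) h 2
    _ = K ^ 2 * ∫ g, (a - u g) ^ 2 ∂ν := integral_const_mul _ _

namespace Matrix

section Frobenius

variable {l m n : Type*} [Fintype l] [Fintype m] [Fintype n]

theorem trace_transpose_mul_self (A : Matrix m n ℝ) : (Aᵀ * A).trace = ∑ i, ∑ j, A i j ^ 2 := by
  simp only [trace, diag, mul_apply, transpose_apply, sq]
  exact Finset.sum_comm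

theorem trace_transpose_mul_self_mul_le (B : Matrix l m ℝ) (S : Matrix m n ℝ) :
    ((B * S)ᵀ * (B * S)).trace ≤ (Sᵀ * S).trace * (Bᵀ * B).trace := by
  simp only [trace_transpose_mul_self]
  calc ∑ i, ∑ j, (B * S) i j ^ 2 ≤ ∑ i, ∑ j, (∑ c, B i c ^ 2) * ∑ c, S c j ^ 2 := by
        gcongr with i _ j _
        exact Finset.sum_mul_sq_le_sq_mul_sq _ _ _
    _ = (∑ c, ∑ j, S c j ^ 2) * ∑ i, ∑ c, B i c ^ 2 := by
        simp only [← Finset.mul_sum, ← Finset.sum_mul, Finset.sum_comm (γ := n)]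
        ring

/-- The `Σ`-weighted Frobenius form of the paper: `⟪A, A⟫_Σ = ‖A Σ^{1/2}‖_F² = E‖A x‖²`. -/
def weightedTraceForm (S : Matrix n n ℝ) : LinearMap.BilinForm ℝ (Matrix m n ℝ) :=
  LinearMap.mk₂ ℝ (fun A B => (A * S * Bᵀ).trace)
    (fun _ _ _ => by simp [Matrix.add_mul, trace_add])
    (fun _ _ _ => by simp [trace_smul])
    (fun _ _ _ => by simp [Matrix.mul_add, trace_add])
    (fun _ _ _ => by simp [trace_smul])

@[simp]
theorem weightedTraceForm_apply (S : Matrix n n ℝ) (A B : Matrix m n ℝ) :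
    weightedTraceForm S A B = (A * S * Bᵀ).trace := rfl

theorem isSymm_weightedTraceForm {S : Matrix n n ℝ} (hS : Sᵀ = S) :
    (weightedTraceForm S : LinearMap.BilinForm ℝ (Matrix m n ℝ)).IsSymm := by
  refine ⟨fun A B => ?_⟩
  rw [weightedTraceForm_apply, weightedTraceForm_apply, ← trace_transpose]
  simp [transpose_mul, hS, Matrix.mul_assoc]

theorem PosSemidef.trace_transpose_mul_self_mul_sqrt [DecidableEq n] {S : Matrix n n ℝ}
    (hS : S.PosSemidef) (A : Matrix m n ℝ) :
    ((A * hS.sqrt)ᵀ * (A * hS.sqrt)).trace = weightedTraceForm S A A := by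
  have hT : hS.sqrtᵀ = hS.sqrt := by
    rw [← conjTranspose_eq_transpose_of_trivial, hS.conjTranspose_sqrt]
  rw [weightedTraceForm_apply, transpose_mul, hT, trace_mul_comm, Matrix.mul_assoc,
    ← Matrix.mul_assoc hS.sqrt, hS.sqrt_mul_self, ← Matrix.mul_assoc]

theorem abs_apply_le_one_of_transpose_mul_self_eq_one [DecidableEq n] {U : Matrix n n ℝ}
    (hU : Uᵀ * U = 1) (i j : n) : |U i j| ≤ 1 :=
  entry_norm_bound_of_unitary ((mem_orthogonalGroup_iff' n ℝ).2 hU) i j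

theorem abs_mul_mul_apply_le {P : Matrix m m ℝ} {Q : Matrix n n ℝ} (hP : ∀ i j, |P i j| ≤ 1)
    (hQ : ∀ i j, |Q i j| ≤ 1) (A : Matrix m n ℝ) (i : m) (j : n) :
    |(P * A * Q) i j| ≤ ∑ a, ∑ b, |A a b| := by
  simp only [mul_apply, Finset.sum_mul]
  rw [Finset.sum_comm]
  refine (Finset.abs_sum_le_sum_abs _ _).trans (Finset.sum_le_sum fun a _ => ?_)
  refine (Finset.abs_sum_le_sum_abs _ _).trans (Finset.sum_le_sum fun b _ => ?_)
  rw [abs_mul, abs_mul]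
  calc |P i a| * |A a b| * |Q b j| ≤ 1 * |A a b| * 1 := by gcongr <;> simp [hP, hQ]
    _ = |A a b| := by ring

end Frobenius

section EntrywiseIntegral

variable {m n α : Type*} [Fintype m] [Fintype n] [MeasurableSpace α] {ν : Measure α}

noncomputable def entrywiseIntegral (ν : Measure α) (M : α → Matrix m n ℝ) : Matrix m n ℝ :=
  of fun i j => ∫ a, M a i j ∂ν

variable [DecidableEq m] [DecidableEq n] {M : α → Matrix m n ℝ}

theorem linearMap_apply_eq_sum (L : Matrix m n ℝ →ₗ[ℝ] ℝ) (A : Matrix m n ℝ) :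
    L A = ∑ i, ∑ j, A i j * L (single i j 1) := by
  conv_lhs => rw [matrix_eq_sum_single A]
  simp only [map_sum]
  refine Finset.sum_congr rfl fun i _ => Finset.sum_congr rfl fun j _ => ?_
  rw [← smul_eq_mul, ← L.map_smul, smul_single, smul_eq_mul, mul_one]

theorem integrable_linearMap_apply (L : Matrix m n ℝ →ₗ[ℝ] ℝ)
    (hM : ∀ i j, Integrable (fun a => M a i j) ν) : Integrable (fun a => L (M a)) ν := by
  simp_rw [linearMap_apply_eq_sum L (M _)]
  exact integrable_finsetSum _ fun i _ => integrable_finsetSum _ fun j _ => (hM i j).mul_const _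

theorem integral_linearMap_apply (L : Matrix m n ℝ →ₗ[ℝ] ℝ)
    (hM : ∀ i j, Integrable (fun a => M a i j) ν) :
    ∫ a, L (M a) ∂ν = L (entrywiseIntegral ν M) := by
  simp_rw [linearMap_apply_eq_sum L (M _), linearMap_apply_eq_sum L (entrywiseIntegral ν M)]
  rw [integral_finsetSum _ fun i _ =>
    integrable_finsetSum _ fun j _ => (hM i j).mul_const _]
  refine Finset.sum_congr rfl fun i _ => ?_
  rw [integral_finsetSum _ fun j _ => (hM i j).mul_const _]
  simp [entrywiseIntegral, integral_mul_const]

theorem integrable_bilinForm_sub_sub {B : LinearMap.BilinForm ℝ (Matrix m n ℝ)} [IsFiniteMeasure ν]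
    (hB : B.IsSymm) (hM : ∀ i j, Integrable (fun a => M a i j) ν) {W : Matrix m n ℝ}
    (hiso : ∀ a, B (M a) (M a) = B W W) :
    Integrable (fun a => B (W - M a) (W - M a)) ν := by
  simp_rw [hB.apply_sub_sub_of_apply_self_eq (hiso _)]
  exact (integrable_const _).sub ((integrable_linearMap_apply (B.flip W) hM).const_mul 2)

/-- `hiso` and `hfix` make `M̄` the `B`-orthogonal projection of `W` onto the fixed points of an
isometric action with orbit `M`; both sides then equal `2‖W‖² - 2⟪M̄, W⟫`. -/
theorem integral_bilinForm_sub_sub {B : LinearMap.BilinForm ℝ (Matrix m n ℝ)}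
    [IsProbabilityMeasure ν] (hB : B.IsSymm) (hM : ∀ i j, Integrable (fun a => M a i j) ν)
    {W : Matrix m n ℝ} (hiso : ∀ a, B (M a) (M a) = B W W)
    (hfix : ∀ a, B (entrywiseIntegral ν M) (M a) = B (entrywiseIntegral ν M) W) :
    ∫ a, B (W - M a) (W - M a) ∂ν
      = 2 * B (W - entrywiseIntegral ν M) (W - entrywiseIntegral ν M) := by
  set Mbar := entrywiseIntegral ν M
  have hint : Integrable (fun a => B (M a) W) ν := integrable_linearMap_apply (B.flip W) hM
  have hmean : ∫ a, B (M a) W ∂ν = B Mbar W := integral_linearMap_apply (B.flip W) hM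
  have hproj : B Mbar Mbar = B Mbar W :=
    calc B Mbar Mbar = ∫ a, B (M a) Mbar ∂ν := (integral_linearMap_apply (B.flip Mbar) hM).symm
      _ = ∫ _, B Mbar W ∂ν := integral_congr_ae (.of_forall fun a => (hB.eq _ _).trans (hfix a))
      _ = B Mbar W := by simp
  simp_rw [hB.apply_sub_sub_of_apply_self_eq (hiso _)]
  rw [integral_sub (integrable_const _) (hint.const_mul 2),
    integral_const_mul 2 (fun a => B (M a) W), hmean]
  simp only [integral_const, probReal_univ, one_smul, map_sub, LinearMap.sub_apply, hB.eq W Mbar,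
    hproj]
  ring

end EntrywiseIntegral

section SecondMoment

variable {l m n : Type*} {μ : Measure (n → ℝ)}

noncomputable def secondMoment (μ : Measure (n → ℝ)) : Matrix n n ℝ :=
  of fun i j => ∫ x, x i * x j ∂μ

theorem secondMoment_transpose : (secondMoment μ)ᵀ = secondMoment μ := by
  ext i j
  simp [secondMoment, mul_comm]

variable [Fintype n]

theorem mulVec_mul_mulVec_eq_sum (A : Matrix m n ℝ) (B : Matrix l n ℝ) (x : n → ℝ) (i : m)
    (j : l) : (A *ᵥ x) i * (B *ᵥ x) j = ∑ a, ∑ b, A i a * B j b * (x a * x b) := by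
  simp only [mulVec, dotProduct, Finset.sum_mul_sum]
  exact Finset.sum_congr rfl fun a _ => Finset.sum_congr rfl fun b _ => by ring

theorem integrable_mulVec_mul_mulVec (hμ : ∀ a b, Integrable (fun x => x a * x b) μ)
    (A : Matrix m n ℝ) (B : Matrix l n ℝ) (i : m) (j : l) :
    Integrable (fun x => (A *ᵥ x) i * (B *ᵥ x) j) μ := by
  simp_rw [mulVec_mul_mulVec_eq_sum]
  exact integrable_finsetSum _ fun a _ => integrable_finsetSum _ fun b _ => (hμ a b).const_mul _

theorem integral_mulVec_mul_mulVec (hμ : ∀ a b, Integrable (fun x => x a * x b) μ)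
    (A : Matrix m n ℝ) (B : Matrix l n ℝ) (i : m) (j : l) :
    ∫ x, (A *ᵥ x) i * (B *ᵥ x) j ∂μ = (A * secondMoment μ * Bᵀ) i j := by
  simp_rw [mulVec_mul_mulVec_eq_sum]
  rw [integral_finsetSum _ fun a _ =>
    integrable_finsetSum _ fun b _ => (hμ a b).const_mul _]
  simp_rw [integral_finsetSum _ fun b _ => (hμ _ b).const_mul _, integral_const_mul]
  simp only [mul_apply, transpose_apply, secondMoment, of_apply, Finset.sum_mul]
  rw [Finset.sum_comm]
  exact Finset.sum_congr rfl fun a _ => Finset.sum_congr rfl fun b _ => by ring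

variable [Fintype m]

theorem integrable_sum_sq_mulVec (hμ : ∀ a b, Integrable (fun x => x a * x b) μ)
    (A : Matrix m n ℝ) : Integrable (fun x => ∑ i, (A *ᵥ x) i ^ 2) μ := by
  simp_rw [sq]
  exact integrable_finsetSum _ fun i _ => integrable_mulVec_mul_mulVec hμ A A i i

theorem integral_sum_sq_mulVec (hμ : ∀ a b, Integrable (fun x => x a * x b) μ)
    (A : Matrix m n ℝ) :
    ∫ x, ∑ i, (A *ᵥ x) i ^ 2 ∂μ = weightedTraceForm (secondMoment μ) A A := by
  simp_rw [sq]
  rw [integral_finsetSum _ fun i _ => integrable_mulVec_mul_mulVec hμ A A i i]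
  simp_rw [integral_mulVec_mul_mulVec hμ]
  rfl

theorem mul_secondMoment_mul_transpose_of_map_eq (hμ : ∀ a b, Integrable (fun x => x a * x b) μ)
    {A : Matrix n n ℝ} (hA : μ.map (A *ᵥ ·) = μ) : A * secondMoment μ * Aᵀ = secondMoment μ := by
  ext i j
  rw [← integral_mulVec_mul_mulVec hμ]
  conv_rhs => rw [secondMoment, of_apply, ← hA]
  rw [integral_map (by fun_prop) (by fun_prop)]

theorem integrable_prod_sum_sq_mulVec {α : Type*} [MeasurableSpace α] {ν : Measure α}
    [SFinite μ] [SFinite ν] (hμ : ∀ a b, Integrable (fun x => x a * x b) μ)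
    {M : α → Matrix m n ℝ} (hM : ∀ i j, Measurable fun a => M a i j)
    (hint : Integrable (fun a => weightedTraceForm (secondMoment μ) (M a) (M a)) ν) :
    Integrable (fun p : (n → ℝ) × α => ∑ i, (M p.2 *ᵥ p.1) i ^ 2) (μ.prod ν) := by
  have hmeas : Measurable fun p : (n → ℝ) × α => ∑ i, (M p.2 *ᵥ p.1) i ^ 2 := by
    simp only [mulVec, dotProduct]
    fun_prop
  refine (integrable_prod_iff' hmeas.aestronglyMeasurable).2
    ⟨.of_forall fun a => integrable_sum_sq_mulVec hμ (M a), ?_⟩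
  refine hint.congr (.of_forall fun a => ?_)
  dsimp only
  rw [← integral_sum_sq_mulVec hμ]
  exact integral_congr_ae (.of_forall fun x => (Real.norm_of_nonneg (by positivity)).symm)

end SecondMoment

end Matrix

theorem MeasureTheory.Measure.IsMulRightInvariant.of_map_inv {G : Type*} [Group G]
    [MeasurableSpace G] [MeasurableMul G] [MeasurableInv G] {ν : Measure G}
    [ν.IsMulLeftInvariant] (h : ν.map (·⁻¹) = ν) : ν.IsMulRightInvariant := by
  have : ν.inv.IsMulRightInvariant := inferInstance
  rwa [Measure.inv, h] at this

section GroupAverage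

variable {G m n : Type*} [Group G] [Fintype m] [Fintype n]
  {ψ : G → Matrix m m ℝ} {φ : G → Matrix n n ℝ}

/-- Its fixed points are exactly the equivariant weight matrices. -/
def repConj (ψ : G → Matrix m m ℝ) (φ : G → Matrix n n ℝ) (g : G) :
    Matrix m n ℝ →ₗ[ℝ] Matrix m n ℝ where
  toFun A := ψ g⁻¹ * A * φ g
  map_add' A B := by simp [Matrix.mul_add, Matrix.add_mul]
  map_smul' c A := by simp

theorem repConj_apply (g : G) (A : Matrix m n ℝ) : repConj ψ φ g A = ψ g⁻¹ * A * φ g := rfl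

theorem repConj_mul (hψ : ∀ g h, ψ (g * h) = ψ g * ψ h) (hφ : ∀ g h, φ (g * h) = φ g * φ h)
    (g h : G) (A : Matrix m n ℝ) : repConj ψ φ (h * g) A = repConj ψ φ g (repConj ψ φ h A) := by
  simp only [repConj_apply, _root_.mul_inv_rev, hψ, hφ, Matrix.mul_assoc]

theorem weightedTraceForm_repConj [DecidableEq m] {S : Matrix n n ℝ} {g : G}
    (hψ : (ψ g⁻¹)ᵀ * ψ g⁻¹ = 1) (hS : φ g * S * (φ g)ᵀ = S) (A B : Matrix m n ℝ) :
    weightedTraceForm S (repConj ψ φ g A) (repConj ψ φ g B) = weightedTraceForm S A B := by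
  have h : repConj ψ φ g A * S * (repConj ψ φ g B)ᵀ
      = ψ g⁻¹ * (A * (φ g * S * (φ g)ᵀ) * Bᵀ) * (ψ g⁻¹)ᵀ := by
    simp only [repConj_apply, transpose_mul, Matrix.mul_assoc]
  rw [weightedTraceForm_apply, h, trace_mul_comm, ← Matrix.mul_assoc, hψ, Matrix.one_mul, hS]
  rfl

variable [MeasurableSpace G] {ν : Measure G}

theorem measurable_repConj_apply [MeasurableInv G] (hψ_meas : ∀ i j, Measurable fun g => ψ g i j)
    (hφ_meas : ∀ i j, Measurable fun g => φ g i j) (A : Matrix m n ℝ) (i : m) (j : n) :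
    Measurable fun g => repConj ψ φ g A i j := by
  simp only [repConj_apply, mul_apply]
  have := fun a b => (hψ_meas a b).comp (measurable_inv (G := G))
  fun_prop

theorem sum_sq_sub_integral_repConj_le [IsProbabilityMeasure ν] {σ : ℝ → ℝ} {K : ℝ≥0}
    (hσ : LipschitzWith K σ)
    (hσψ : ∀ g (v : m → ℝ), (fun i => σ ((ψ g *ᵥ v) i)) = ψ g *ᵥ fun i => σ (v i))
    {W : Matrix m n ℝ} (hM : ∀ i j, MemLp (fun g => repConj ψ φ g W i j) 2 ν) (x : n → ℝ) :
    ∑ i, (σ ((W *ᵥ x) i) - (∫ g, ψ g⁻¹ *ᵥ (fun i' => σ ((W *ᵥ (φ g *ᵥ x)) i')) ∂ν) i) ^ 2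
      ≤ K ^ 2 * ∫ g, ∑ i, ((W - repConj ψ φ g W) *ᵥ x) i ^ 2 ∂ν := by
  have hrw : ∀ g, ψ g⁻¹ *ᵥ (fun i' => σ ((W *ᵥ (φ g *ᵥ x)) i'))
      = fun i => σ ((repConj ψ φ g W *ᵥ x) i) := fun g => by
    rw [← hσψ, repConj_apply, mulVec_mulVec, mulVec_mulVec]
  have hu : ∀ i, MemLp (fun g => (repConj ψ φ g W *ᵥ x) i) 2 ν := fun i => by
    simp only [mulVec, dotProduct]
    exact memLp_finsetSum _ fun j _ => (hM i j).mul_const _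
  have hterm : ∀ i, Integrable (fun g => ((W - repConj ψ φ g W) *ᵥ x) i ^ 2) ν := fun i => by
    simp only [sub_mulVec, Pi.sub_apply]
    exact ((memLp_const _).sub (hu i)).integrable_sq
  simp_rw [hrw]
  calc ∑ i, (σ ((W *ᵥ x) i) - (∫ g, fun i => σ ((repConj ψ φ g W *ᵥ x) i) ∂ν) i) ^ 2
      ≤ ∑ i, K ^ 2 * ∫ g, ((W - repConj ψ φ g W) *ᵥ x) i ^ 2 ∂ν := by
        gcongr with i
        rw [eval_integral fun i => (hσ.memLp_comp (hu i)).integrable one_le_two]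
        simpa only [sub_mulVec, Pi.sub_apply] using hσ.sq_sub_integral_comp_le _ (hu i)
    _ = K ^ 2 * ∫ g, ∑ i, ((W - repConj ψ φ g W) *ᵥ x) i ^ 2 ∂ν := by
        rw [integral_finsetSum _ fun i _ => hterm i, Finset.mul_sum]

theorem integral_sum_sq_sub_integral_repConj_le [MeasurableInv G] [IsProbabilityMeasure ν]
    {μ : Measure (n → ℝ)} [SFinite μ] {σ : ℝ → ℝ} {K : ℝ≥0} (hσ : LipschitzWith K σ)
    (hσψ : ∀ g (v : m → ℝ), (fun i => σ ((ψ g *ᵥ v) i)) = ψ g *ᵥ fun i => σ (v i))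
    (hψ_meas : ∀ i j, Measurable fun g => ψ g i j) (hφ_meas : ∀ i j, Measurable fun g => φ g i j)
    (hμ : ∀ a b, Integrable (fun x => x a * x b) μ) {W : Matrix m n ℝ}
    (hW : ∀ i j, MemLp (fun g => repConj ψ φ g W i j) 2 ν)
    (hint : Integrable (fun g => weightedTraceForm (secondMoment μ) (W - repConj ψ φ g W)
      (W - repConj ψ φ g W)) ν) :
    ∫ x, ∑ i, (σ ((W *ᵥ x) i) - (∫ g, ψ g⁻¹ *ᵥ (fun i' => σ ((W *ᵥ (φ g *ᵥ x)) i')) ∂ν) i) ^ 2 ∂μ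
      ≤ K ^ 2 * ∫ g, weightedTraceForm (secondMoment μ) (W - repConj ψ φ g W)
          (W - repConj ψ φ g W) ∂ν := by
  have hprod := integrable_prod_sum_sq_mulVec hμ (M := fun g => W - repConj ψ φ g W)
    (fun i j => measurable_const.sub (measurable_repConj_apply hψ_meas hφ_meas W i j)) hint
  calc _ ≤ ∫ x, K ^ 2 * ∫ g, ∑ i, ((W - repConj ψ φ g W) *ᵥ x) i ^ 2 ∂ν ∂μ :=
        integral_mono_of_nonneg (.of_forall fun x => by positivity)
          (hprod.integral_prod_left.const_mul _)
          (.of_forall (sum_sq_sub_integral_repConj_le hσ hσψ hW))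
    _ = _ := by
        rw [integral_const_mul, integral_integral_swap hprod]
        simp_rw [integral_sum_sq_mulVec hμ]

variable [DecidableEq m] [DecidableEq n]

theorem memLp_repConj_apply [MeasurableInv G] [IsFiniteMeasure ν]
    (hψ_meas : ∀ i j, Measurable fun g => ψ g i j) (hφ_meas : ∀ i j, Measurable fun g => φ g i j)
    (hψ_orth : ∀ g, (ψ g)ᵀ * ψ g = 1) (hφ_orth : ∀ g, (φ g)ᵀ * φ g = 1) (p : ℝ≥0∞)
    (A : Matrix m n ℝ) (i : m) (j : n) : MemLp (fun g => repConj ψ φ g A i j) p ν := by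
  refine MemLp.of_bound (measurable_repConj_apply hψ_meas hφ_meas A i j).aestronglyMeasurable
    (∑ a, ∑ b, |A a b|) (.of_forall fun g => ?_)
  exact (Real.norm_eq_abs _).trans_le <| abs_mul_mul_apply_le
    (abs_apply_le_one_of_transpose_mul_self_eq_one (hψ_orth g⁻¹))
    (abs_apply_le_one_of_transpose_mul_self_eq_one (hφ_orth g)) A i j

theorem repConj_entrywiseIntegral [MeasurableMul G] [ν.IsMulRightInvariant]
    (hψ : ∀ g h, ψ (g * h) = ψ g * ψ h) (hφ : ∀ g h, φ (g * h) = φ g * φ h)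
    {A : Matrix m n ℝ} (hA : ∀ i j, Integrable (fun g => repConj ψ φ g A i j) ν) (g : G) :
    repConj ψ φ g (entrywiseIntegral ν (repConj ψ φ · A))
      = entrywiseIntegral ν (repConj ψ φ · A) := by
  ext i j
  have h := integral_linearMap_apply ((entryLinearMap ℝ ℝ i j).comp (repConj ψ φ g)) hA
  simp only [LinearMap.comp_apply, entryLinearMap_apply, ← repConj_mul hψ hφ] at h
  rw [← h, integral_mul_right_eq_self (fun h => repConj ψ φ h A i j) g]
  rfl

theorem integrable_weightedTraceForm_sub_repConj [IsFiniteMeasure ν]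
    (hψ_orth : ∀ g, (ψ g)ᵀ * ψ g = 1) {S : Matrix n n ℝ} (hS_symm : Sᵀ = S)
    (hS : ∀ g, φ g * S * (φ g)ᵀ = S) {W : Matrix m n ℝ}
    (hW : ∀ i j, Integrable (fun g => repConj ψ φ g W i j) ν) :
    Integrable (fun g => weightedTraceForm S (W - repConj ψ φ g W) (W - repConj ψ φ g W)) ν :=
  integrable_bilinForm_sub_sub (isSymm_weightedTraceForm hS_symm) hW
    fun g => weightedTraceForm_repConj (hψ_orth g⁻¹) (hS g) W W

theorem integral_weightedTraceForm_sub_repConj [MeasurableMul G] [IsProbabilityMeasure ν]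
    [ν.IsMulRightInvariant] (hψ_mul : ∀ g h, ψ (g * h) = ψ g * ψ h)
    (hφ_mul : ∀ g h, φ (g * h) = φ g * φ h) (hψ_orth : ∀ g, (ψ g)ᵀ * ψ g = 1)
    {S : Matrix n n ℝ} (hS_symm : Sᵀ = S) (hS : ∀ g, φ g * S * (φ g)ᵀ = S) {W : Matrix m n ℝ}
    (hW : ∀ i j, Integrable (fun g => repConj ψ φ g W i j) ν) :
    ∫ g, weightedTraceForm S (W - repConj ψ φ g W) (W - repConj ψ φ g W) ∂ν
      = 2 * weightedTraceForm S (W - entrywiseIntegral ν (repConj ψ φ · W))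
          (W - entrywiseIntegral ν (repConj ψ φ · W)) := by
  set Wbar := entrywiseIntegral ν (repConj ψ φ · W)
  refine integral_bilinForm_sub_sub (isSymm_weightedTraceForm hS_symm) hW
    (fun g => weightedTraceForm_repConj (hψ_orth g⁻¹) (hS g) W W) fun g => ?_
  have hWbar : repConj ψ φ g Wbar = Wbar := repConj_entrywiseIntegral hψ_mul hφ_mul hW g
  calc weightedTraceForm S Wbar (repConj ψ φ g W)
      = weightedTraceForm S (repConj ψ φ g Wbar) (repConj ψ φ g W) := by rw [hWbar]
    _ = weightedTraceForm S Wbar W := weightedTraceForm_repConj (hψ_orth g⁻¹) (hS g) Wbar W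

end GroupAverage

theorem stmt_19_general {G : Type*} [Group G] [TopologicalSpace G] [IsTopologicalGroup G]
    [MeasurableSpace G] [BorelSpace G]
    (lam : Measure G) [IsProbabilityMeasure lam]
    (hlam_left : ∀ g : G, Measure.map (fun h => g * h) lam = lam)
    (hlam_inv : Measure.map (fun g : G => g⁻¹) lam = lam)
    {d k : ℕ}
    (φ : G → Matrix (Fin d) (Fin d) ℝ)
    (hφ_meas : ∀ i j, Measurable fun g => φ g i j)
    (hφ_mul : ∀ g h, φ (g * h) = φ g * φ h)
    (hφ_orth : ∀ g, (φ g)ᵀ * φ g = 1)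
    (ψ : G → Matrix (Fin k) (Fin k) ℝ)
    (hψ_meas : ∀ i j, Measurable fun g => ψ g i j)
    (hψ_mul : ∀ g h, ψ (g * h) = ψ g * ψ h)
    (hψ_orth : ∀ g, (ψ g)ᵀ * ψ g = 1)
    -- the activation function
    (C : ℝ)
    (σ : ℝ → ℝ)
    (hσ_lip : ∀ a b, |σ a - σ b| ≤ C * |a - b|)
    (hσ_comm : ∀ g (v : Fin k → ℝ),
      (fun i => σ (((ψ g).mulVec v) i)) = (ψ g).mulVec (fun i => σ (v i)))
    -- the invariant input distribution and its covariance
    (μ : Measure (Fin d → ℝ)) [IsProbabilityMeasure μ]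
    (hμ_inv : ∀ g : G, Measure.map ((φ g).mulVec) μ = μ)
    (hmom : ∀ i j, Integrable (fun x => x i * x j) μ)
    (Sig : Matrix (Fin d) (Fin d) ℝ)
    (hSig : ∀ i j, Sig i j = ∫ x, x i * x j ∂μ)
    (hSig_psd : Sig.PosSemidef)
    -- the layer
    (W : Matrix (Fin k) (Fin d) ℝ)
    (Wbar : Matrix (Fin k) (Fin d) ℝ)
    (hWbar : ∀ i j, Wbar i j = ∫ g, (ψ g⁻¹ * W * φ g) i j ∂lam) :
    (∫ x, ∑ i, (σ ((W.mulVec x) i)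
        - (∫ g, (ψ g⁻¹).mulVec (fun i' => σ ((W.mulVec ((φ g).mulVec x)) i')) ∂lam) i) ^ 2
        ∂μ)
      ≤ 2 * C ^ 2
          * (((W - Wbar) * hSig_psd.sqrt)ᵀ * ((W - Wbar) * hSig_psd.sqrt)).trace ∧
    2 * C ^ 2 * (((W - Wbar) * hSig_psd.sqrt)ᵀ * ((W - Wbar) * hSig_psd.sqrt)).trace
      ≤ 2 * C ^ 2 * (hSig_psd.sqrtᵀ * hSig_psd.sqrt).trace
          * ((W - Wbar)ᵀ * (W - Wbar)).trace := by
  refine ⟨?_, by rw [mul_assoc (2 * C ^ 2)]; gcongr; exact trace_transpose_mul_self_mul_le _ _⟩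
  have hC : 0 ≤ C := (abs_nonneg _).trans (by simpa using hσ_lip 1 0)
  have hσ : LipschitzWith (Real.toNNReal C) σ :=
    .of_dist_le' fun a b => by simpa only [Real.dist_eq] using hσ_lip a b
  have : lam.IsMulLeftInvariant := ⟨hlam_left⟩
  have : lam.IsMulRightInvariant := .of_map_inv hlam_inv
  obtain rfl : Sig = secondMoment μ := Matrix.ext hSig
  obtain rfl : Wbar = entrywiseIntegral lam (repConj ψ φ · W) := Matrix.ext hWbar
  have hM := memLp_repConj_apply (ν := lam) hψ_meas hφ_meas hψ_orth hφ_orth 2 W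
  have hMint i j := (hM i j).integrable one_le_two
  have hS g := mul_secondMoment_mul_transpose_of_map_eq hmom (hμ_inv g)
  calc _ ≤ C ^ 2 * ∫ g, weightedTraceForm (secondMoment μ) (W - repConj ψ φ g W)
          (W - repConj ψ φ g W) ∂lam := by
        simpa [Real.coe_toNNReal C hC] using
          integral_sum_sq_sub_integral_repConj_le hσ hσ_comm hψ_meas hφ_meas hmom hM
            (integrable_weightedTraceForm_sub_repConj hψ_orth secondMoment_transpose hS hMint)
    _ = _ := by
        rw [integral_weightedTraceForm_sub_repConj hψ_mul hφ_mul hψ_orth secondMoment_transpose hS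
          hMint, hSig_psd.trace_transpose_mul_self_mul_sqrt]
        ring

/-- The distance in `L2(μ)` from a single neural network layer `f_W(x) = σ(Wx)` (with
`C`-Lipschitz elementwise activation commuting with `ψ`) to its equivariant projection
`Q f_W` is controlled by the `G`-anti-symmetric part `W⊥ = W − W̄` of the weights:
`‖(id − Q) f_W‖_μ² ≤ 2C² ‖W⊥ Σ^{1/2}‖_F² ≤ 2C² ‖Σ^{1/2}‖_F² ‖W⊥‖_F²`. -/
theorem stmt_19 {G : Type*} [Group G] [TopologicalSpace G] [IsTopologicalGroup G]
    [CompactSpace G] [SecondCountableTopology G] [T2Space G]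
    [MeasurableSpace G] [BorelSpace G]
    (lam : Measure G) [IsProbabilityMeasure lam]
    (hlam_left : ∀ g : G, Measure.map (fun h => g * h) lam = lam)
    (hlam_inv : Measure.map (fun g : G => g⁻¹) lam = lam)
    {d k : ℕ}
    (φ : G → Matrix (Fin d) (Fin d) ℝ)
    (hφ_meas : ∀ i j, Measurable fun g => φ g i j)
    (hφ_one : φ 1 = 1)
    (hφ_mul : ∀ g h, φ (g * h) = φ g * φ h)
    (hφ_orth : ∀ g, (φ g)ᵀ * φ g = 1)
    (ψ : G → Matrix (Fin k) (Fin k) ℝ)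
    (hψ_meas : ∀ i j, Measurable fun g => ψ g i j)
    (hψ_one : ψ 1 = 1)
    (hψ_mul : ∀ g h, ψ (g * h) = ψ g * ψ h)
    (hψ_orth : ∀ g, (ψ g)ᵀ * ψ g = 1)
    -- the activation function
    (C : ℝ) (hC : 0 ≤ C)
    (σ : ℝ → ℝ)
    (hσ_lip : ∀ a b, |σ a - σ b| ≤ C * |a - b|)
    (hσ_comm : ∀ g (v : Fin k → ℝ),
      (fun i => σ (((ψ g).mulVec v) i)) = (ψ g).mulVec (fun i => σ (v i)))
    -- the invariant input distribution and its covariance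
    (μ : Measure (Fin d → ℝ)) [IsProbabilityMeasure μ]
    (hμ_inv : ∀ g : G, Measure.map ((φ g).mulVec) μ = μ)
    (hmom : ∀ i j, Integrable (fun x => x i * x j) μ)
    (Sig : Matrix (Fin d) (Fin d) ℝ)
    (hSig : ∀ i j, Sig i j = ∫ x, x i * x j ∂μ)
    (hSig_psd : Sig.PosSemidef)
    -- the layer
    (W : Matrix (Fin k) (Fin d) ℝ)
    (hfW_L2 : MemLp (fun x => fun i => σ ((W.mulVec x) i)) 2 μ)
    (Wbar : Matrix (Fin k) (Fin d) ℝ)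
    (hWbar : ∀ i j, Wbar i j = ∫ g, (ψ g⁻¹ * W * φ g) i j ∂lam) :
    (∫ x, ∑ i, (σ ((W.mulVec x) i)
        - (∫ g, (ψ g⁻¹).mulVec (fun i' => σ ((W.mulVec ((φ g).mulVec x)) i')) ∂lam) i) ^ 2
        ∂μ)
      ≤ 2 * C ^ 2
          * (((W - Wbar) * hSig_psd.sqrt)ᵀ * ((W - Wbar) * hSig_psd.sqrt)).trace ∧
    2 * C ^ 2 * (((W - Wbar) * hSig_psd.sqrt)ᵀ * ((W - Wbar) * hSig_psd.sqrt)).trace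
      ≤ 2 * C ^ 2 * (hSig_psd.sqrtᵀ * hSig_psd.sqrt).trace
          * ((W - Wbar)ᵀ * (W - Wbar)).trace :=
  stmt_19_general lam hlam_left hlam_inv φ hφ_meas hφ_mul hφ_orth ψ hψ_meas hψ_mul hψ_orth C σ
    hσ_lip hσ_comm μ hμ_inv hmom Sig hSig hSig_psd W Wbar hWbar
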